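/- For Gaussian measures P, Q on ℝ with densities p, q, the quantity Ψ(P,Q) = 2‖p − q‖²_{L²} / ((1 − ‖p‖²_{L²})(1 − ‖q‖²_{L²})) admits the closed form Ψ(P,Q) = [1/(σ_p√π) − 2√2·λ + 1/(σ_q√π)] / [(1 − 1/(2σ_p√π))(1 − 1/(2σ_q√π))], where λ = exp(−(μ_p − μ_q)²/(2(σ_p² + σ_q²))) / √(π(σ_p² + σ_q²)). -/

import Mathlib

/-!
Completing the square, the product of the densities of `N(μp, σp²)` and `N(μq, σq²)` is a
constant multiple of a Gaussian, so `∫ p q = exp (-(μp - μq)² / (2 (σp² + σq²))) / √(2π (σp² + σq²))`.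
Taking `p = q` gives `‖p‖² = 1 / (2 σ √π)`, and expanding `‖p - q‖² = ‖p‖² - 2 ⟪p, q⟫ + ‖q‖²`
gives the closed form.
-/

open MeasureTheory Real

noncomputable def gaussianPdf (μ σ x : ℝ) : ℝ :=
  (σ * Real.sqrt (2 * Real.pi))⁻¹ * Real.exp (-((x - μ) ^ 2) / (2 * σ ^ 2))

lemma integral_sub_sq {α : Type*} [MeasurableSpace α] {μ : Measure α} {f g : α → ℝ}
    (hf : MemLp f 2 μ) (hg : MemLp g 2 μ) :
    ∫ x, (f x - g x) ^ 2 ∂μ = ∫ x, f x ^ 2 ∂μ - 2 * ∫ x, f x * g x ∂μ + ∫ x, g x ^ 2 ∂μ := by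
  have hfg : Integrable (fun x => 2 * (f x * g x)) μ := (hf.integrable_mul hg).const_mul 2
  have hsub : Integrable (fun x => f x ^ 2 - 2 * (f x * g x)) μ := hf.integrable_sq.sub hfg
  simp_rw [sub_sq, mul_assoc]
  rw [integral_add hsub hg.integrable_sq,
    integral_sub hf.integrable_sq hfg, integral_const_mul]

lemma gaussianPdf_mul_gaussianPdf {σp σq : ℝ} (hσp : σp ≠ 0) (hσq : σq ≠ 0) (μp μq x : ℝ) :
    gaussianPdf μp σp x * gaussianPdf μq σq x =
      (2 * π * (σp * σq))⁻¹ * exp (-((μp - μq) ^ 2) / (2 * (σp ^ 2 + σq ^ 2))) *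
        exp (-((σp ^ 2 + σq ^ 2) / (2 * σp ^ 2 * σq ^ 2)) *
          (x - (μp * σq ^ 2 + μq * σp ^ 2) / (σp ^ 2 + σq ^ 2)) ^ 2) := by
  have hconst : (σp * sqrt (2 * π))⁻¹ * (σq * sqrt (2 * π))⁻¹ = (2 * π * (σp * σq))⁻¹ := by
    rw [← mul_inv, mul_mul_mul_comm, mul_self_sqrt (by positivity), mul_comm (σp * σq)]
  have hexponent : -((x - μp) ^ 2) / (2 * σp ^ 2) + -((x - μq) ^ 2) / (2 * σq ^ 2) =
      -((μp - μq) ^ 2) / (2 * (σp ^ 2 + σq ^ 2)) + -((σp ^ 2 + σq ^ 2) / (2 * σp ^ 2 * σq ^ 2)) *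
        (x - (μp * σq ^ 2 + μq * σp ^ 2) / (σp ^ 2 + σq ^ 2)) ^ 2 := by
    field_simp
    ring
  rw [gaussianPdf, gaussianPdf, mul_mul_mul_comm, ← exp_add, hexponent, exp_add, hconst,
    ← mul_assoc]

lemma integral_gaussianPdf_mul {σp σq : ℝ} (hσp : 0 < σp) (hσq : 0 < σq) (μp μq : ℝ) :
    ∫ x, gaussianPdf μp σp x * gaussianPdf μq σq x =
      exp (-((μp - μq) ^ 2) / (2 * (σp ^ 2 + σq ^ 2))) / sqrt (2 * π * (σp ^ 2 + σq ^ 2)) := by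
  simp_rw [gaussianPdf_mul_gaussianPdf hσp.ne' hσq.ne']
  rw [integral_const_mul, integral_sub_right_eq_self (fun x => exp (-_ * x ^ 2)), integral_gaussian]
  have hsqrt : sqrt (π / ((σp ^ 2 + σq ^ 2) / (2 * σp ^ 2 * σq ^ 2))) =
      2 * π * (σp * σq) / sqrt (2 * π * (σp ^ 2 + σq ^ 2)) := by
    rw [eq_div_iff (by positivity), ← sqrt_sq (by positivity : 0 ≤ 2 * π * (σp * σq)),
      ← sqrt_mul (by positivity)]
    congr 1
    field_simp
  rw [hsqrt]
  field_simp

lemma integrable_gaussianPdf_mul {σp σq : ℝ} (hσp : 0 < σp) (hσq : 0 < σq) (μp μq : ℝ) :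
    Integrable fun x => gaussianPdf μp σp x * gaussianPdf μq σq x := by
  simp_rw [gaussianPdf_mul_gaussianPdf hσp.ne' hσq.ne']
  exact ((integrable_exp_neg_mul_sq (by positivity)).comp_sub_right _).const_mul _

lemma integral_gaussianPdf_sq {σ : ℝ} (hσ : 0 < σ) (μ : ℝ) :
    ∫ x, gaussianPdf μ σ x ^ 2 = 1 / (2 * σ * sqrt π) := by
  simp_rw [sq, integral_gaussianPdf_mul hσ hσ]
  have hsqrt : sqrt (2 * π * (σ ^ 2 + σ ^ 2)) = 2 * σ * sqrt π := by
    rw [show 2 * π * (σ ^ 2 + σ ^ 2) = (2 * σ) ^ 2 * π by ring, sqrt_mul (by positivity),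
      sqrt_sq (by positivity)]
  rw [sub_self, hsqrt]
  simp

lemma memLp_two_gaussianPdf {σ : ℝ} (hσ : 0 < σ) (μ : ℝ) : MemLp (gaussianPdf μ σ) 2 := by
  rw [memLp_two_iff_integrable_sq (by unfold gaussianPdf; fun_prop)]
  simpa only [sq] using integrable_gaussianPdf_mul hσ hσ μ μ

theorem psi_closed_form (μp μq σp σq : ℝ)
    (hσp : σp > 1 / (2 * Real.sqrt Real.pi)) (hσq : σq > 1 / (2 * Real.sqrt Real.pi)) :
    (2 * ∫ x : ℝ, (gaussianPdf μp σp x - gaussianPdf μq σq x) ^ 2) /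
        ((1 - ∫ x : ℝ, (gaussianPdf μp σp x) ^ 2) * (1 - ∫ x : ℝ, (gaussianPdf μq σq x) ^ 2)) =
      (1 / (σp * Real.sqrt Real.pi) -
          2 * Real.sqrt 2 *
            (Real.exp (-((μp - μq) ^ 2) / (2 * (σp ^ 2 + σq ^ 2))) /
              Real.sqrt (Real.pi * (σp ^ 2 + σq ^ 2))) +
          1 / (σq * Real.sqrt Real.pi)) /
        ((1 - 1 / (2 * σp * Real.sqrt Real.pi)) * (1 - 1 / (2 * σq * Real.sqrt Real.pi))) := by
  have hσp0 : 0 < σp := lt_trans (by positivity) hσp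
  have hσq0 : 0 < σq := lt_trans (by positivity) hσq
  rw [integral_sub_sq (memLp_two_gaussianPdf hσp0 μp) (memLp_two_gaussianPdf hσq0 μq),
    integral_gaussianPdf_sq hσp0, integral_gaussianPdf_sq hσq0,
    integral_gaussianPdf_mul hσp0 hσq0, mul_assoc 2 π, sqrt_mul zero_le_two]
  have hsqrt2 : sqrt 2 * sqrt 2 = 2 := mul_self_sqrt zero_le_two
  set E := exp (-((μp - μq) ^ 2) / (2 * (σp ^ 2 + σq ^ 2)))
  congr 1
  field_simp
  linear_combination 2 * σp * σq * sqrt π * E * hsqrt2
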